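/- Let (R, m) be a Noetherian local ring with coefficient field k, let E be an R-injective hull of k, and fix a k-linear projection σ: E → k of E onto its socle. For every R-module M, the map Φ_M: Hom_R(M, E) → Hom_k^Σ(M, k) given by post-composition with σ is an isomorphism of R-modules, functorial in M. -/

import Mathlib

/-!
STATEMENT 9: Let (R, m) be a Noetherian local ring with coefficient field k, let E be an
R-injective hull of k, and fix a k-linear projection σ: E → k of E onto its socle.  For
every R-module M, the map Φ_M : Hom_R(M, E) → Hom_k^Σ(M, k) given by post-composition
with σ is an isomorphism of R-modules, functorial in M.

A k-linear functional M → k is Σ-continuous iff it annihilates m^t·P for some t, for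
every finitely generated submodule P ⊆ M.  The conclusion is expressed by stating that
σ ∘ φ is Σ-continuous for each φ ∈ Hom_R(M,E), that Φ_M is injective, that it surjects
onto the Σ-continuous functionals, that it is R-linear for the action (r·λ)(x) = λ(r·x),
and that it is functorial in M.
-/

/-- A `k`-linear functional on an `R`-module is Σ-continuous iff it annihilates
`I^t • P` for some `t`, for every finitely generated `R`-submodule `P`. -/
def SigmaContToK (k : Type) {R M : Type} [CommRing R] [Field k] [Algebra k R]
    [AddCommGroup M] [Module R M] [Module k M]
    (I : Ideal R) (f : M →ₗ[k] k) : Prop :=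
  ∀ P : Submodule R M, P.FG → ∃ t : ℕ, ∀ x ∈ (I ^ t • P : Submodule R M), f x = 0

/-!
Every nonzero submodule of `E` contains the socle generator `e`, since `E` is an essential
extension of `R ∙ e ≅ k`. Hence `σ` detects nonzero elements through their multiples
(injectivity), and by Krull's intersection theorem every finitely generated submodule of `E` is
killed by a power of `m` (Σ-continuity). For surjectivity it suffices, for each `x : M`, to find
`w : E` with `σ (r • w) = g (r • x)` for all `r`: faithfulness of `σ` then makes `x ↦ w` an
`R`-linear map. Such a `w` represents the functional `r ↦ g (r • x)`, which vanishes on some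
`m ^ t`; functionals vanishing on an ideal `J ⊇ m ^ t` are represented by descending induction on
`J`, peeling off a socle element `a` of `R ⧸ J` with the help of a `w₁` satisfying `a • w₁ = e`.
-/

universe u

open IsLocalRing

theorem Submodule.eq_zero_of_forall_mem_pow_smul {R M : Type*} [CommRing R] [IsNoetherianRing R]
    [IsLocalRing R] [AddCommGroup M] [Module R M] {I : Ideal R} (hI : I ≠ ⊤) {N : Submodule R M}
    (hN : N.FG) {x : M} (hx : ∀ t : ℕ, x ∈ I ^ t • N) : x = 0 := by
  have hxN : x ∈ N := Submodule.smul_le_right (hx 1)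
  have : Module.Finite R N := Module.Finite.iff_fg.mpr hN
  have hKrull : (⟨x, hxN⟩ : N) ∈ (⨅ t : ℕ, I ^ t • ⊤ : Submodule R N) :=
    (Submodule.mem_iInf _).mpr fun t => (Submodule.mem_smul_top_iff _ N _).mpr (hx t)
  rw [I.iInf_pow_smul_eq_bot_of_isLocalRing hI, Submodule.mem_bot] at hKrull
  exact congrArg Subtype.val hKrull

theorem Ideal.exists_notMem_forall_mul_mem {R : Type*} [CommRing R] {I J : Ideal R} (hJ : J ≠ ⊤)
    {u : ℕ} (hu : I ^ u ≤ J) : ∃ a ∉ J, ∀ n ∈ I, n * a ∈ J := by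
  induction u with
  | zero => exact absurd (top_le_iff.mp (by simpa using hu)) hJ
  | succ u ih =>
    by_cases h : I ^ u ≤ J
    · exact ih h
    · obtain ⟨a, ha, haJ⟩ := SetLike.not_le_iff_exists.mp h
      exact ⟨a, haJ, fun n hn => hu (pow_succ' I u ▸ Ideal.mul_mem_mul hn ha)⟩

theorem Module.Injective.exists_apply_eq {R : Type*} {E N : Type u} [CommRing R] [AddCommGroup E]
    [Module R E] [AddCommGroup N] [Module R N] (hE : Module.Injective R E) {x : N} {z : E}
    (h : ∀ r : R, r • x = 0 → r • z = 0) : ∃ ψ : N →ₗ[R] E, ψ x = z := by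
  let f : (R ∙ x) →ₗ[R] E :=
    (Ideal.torsionOf R N x).liftQ (LinearMap.toSpanSingleton R E z) (fun r hr => h r hr) ∘ₗ
      (Ideal.quotTorsionOfEquivSpanSingleton R N x).symm
  obtain ⟨ψ, hψ⟩ := hE.out (R ∙ x).subtype Subtype.coe_injective f
  refine ⟨ψ, (hψ ⟨x, Submodule.mem_span_singleton_self x⟩).trans ?_⟩
  have hsymm : (Ideal.quotTorsionOfEquivSpanSingleton R N x).symm
      ⟨x, Submodule.mem_span_singleton_self x⟩ = Submodule.Quotient.mk 1 := by
    rw [LinearEquiv.symm_apply_eq, Ideal.quotTorsionOfEquivSpanSingleton_apply_mk, one_smul]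
  simp only [f, LinearMap.comp_apply, LinearEquiv.coe_coe, hsymm]
  exact one_smul R z

theorem sigmaContToK_comp {R k M E : Type} [CommRing R] [Field k] [Algebra k R]
    [AddCommGroup M] [Module R M] [Module k M] [IsScalarTower k R M]
    [AddCommGroup E] [Module R E] [Module k E] [IsScalarTower k R E] {I : Ideal R}
    (hE : ∀ N : Submodule R E, N.FG → ∃ t : ℕ, I ^ t • N = ⊥) (σ : E →ₗ[k] k)
    (φ : M →ₗ[R] E) : SigmaContToK k I (σ ∘ₗ φ.restrictScalars k) := by
  intro P hP
  obtain ⟨t, ht⟩ := hE _ (hP.map φ)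
  refine ⟨t, fun x hx => ?_⟩
  have hφx : φ x ∈ I ^ t • P.map φ := Submodule.map_smul'' _ _ φ ▸ Submodule.mem_map_of_mem hx
  rw [ht, Submodule.mem_bot] at hφx
  simp [hφx]

theorem exists_sub_algebraMap_mem_maximalIdeal {R k : Type*} [CommRing R] [IsLocalRing R]
    [Field k] [Algebra k R] (hk : Function.Surjective ((residue R).comp (algebraMap k R)))
    (r : R) : ∃ c : k, r - algebraMap k R c ∈ maximalIdeal R := by
  obtain ⟨c, hc⟩ := hk (residue R r)
  refine ⟨c, (residue_eq_zero_iff _).mp ?_⟩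
  rw [map_sub, ← RingHom.comp_apply, hc, sub_self]

section EssentialExtension

variable {R E : Type*} [CommRing R] [IsLocalRing R] [AddCommGroup E] [Module R E] {e : E}

theorem ne_zero_of_smul_eq_zero_iff_mem_maximalIdeal
    (he : ∀ r : R, r • e = 0 ↔ r ∈ maximalIdeal R) : e ≠ 0 := fun h0 =>
  (maximalIdeal.isMaximal R).ne_top <|
    (Ideal.eq_top_iff_one _).mpr ((he 1).mp (by rw [one_smul, h0]))

theorem mem_of_ne_bot_of_essential (he : ∀ r : R, r • e = 0 ↔ r ∈ maximalIdeal R)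
    (hess : ∀ N : Submodule R E, N ≠ ⊥ → N ⊓ Submodule.span R {e} ≠ ⊥) {N : Submodule R E}
    (hN : N ≠ ⊥) : e ∈ N := by
  obtain ⟨z, hz, hz0⟩ := Submodule.exists_mem_ne_zero_of_ne_bot (hess N hN)
  obtain ⟨hzN, hze⟩ := Submodule.mem_inf.mp hz
  obtain ⟨s, rfl⟩ := Submodule.mem_span_singleton.mp hze
  have hs : IsUnit s := notMem_maximalIdeal.mp fun hs => hz0 ((he s).mpr hs)
  exact (Submodule.smul_mem_iff_of_isUnit N hs).mp hzN

theorem exists_pow_smul_eq_bot_of_fg [IsNoetherianRing R]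
    (he : ∀ r : R, r • e = 0 ↔ r ∈ maximalIdeal R)
    (hess : ∀ N : Submodule R E, N ≠ ⊥ → N ⊓ Submodule.span R {e} ≠ ⊥) {N : Submodule R E}
    (hN : N.FG) : ∃ t : ℕ, maximalIdeal R ^ t • N = ⊥ := by
  by_contra! h
  exact ne_zero_of_smul_eq_zero_iff_mem_maximalIdeal he <|
    Submodule.eq_zero_of_forall_mem_pow_smul (maximalIdeal.isMaximal R).ne_top hN
      fun t => mem_of_ne_bot_of_essential he hess (h t)

variable {k : Type*} [Field k] [Module k E] {σ : E →ₗ[k] k}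

theorem eq_zero_of_forall_apply_smul_eq_zero (he : ∀ r : R, r • e = 0 ↔ r ∈ maximalIdeal R)
    (hess : ∀ N : Submodule R E, N ≠ ⊥ → N ⊓ Submodule.span R {e} ≠ ⊥) (hσe : σ e = 1)
    {y : E} (hy : ∀ r : R, σ (r • y) = 0) : y = 0 := by
  by_contra hy0
  have hey : e ∈ Submodule.span R {y} :=
    mem_of_ne_bot_of_essential he hess (by simpa using hy0)
  obtain ⟨r, hr⟩ := Submodule.mem_span_singleton.mp hey
  simpa [hr, hσe] using hy r

theorem linearMap_ext_of_forall_apply_eq (he : ∀ r : R, r • e = 0 ↔ r ∈ maximalIdeal R)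
    (hess : ∀ N : Submodule R E, N ≠ ⊥ → N ⊓ Submodule.span R {e} ≠ ⊥) (hσe : σ e = 1)
    {M : Type*} [AddCommGroup M] [Module R M] {φ ψ : M →ₗ[R] E}
    (h : ∀ x : M, σ (φ x) = σ (ψ x)) : φ = ψ := by
  ext x
  refine sub_eq_zero.mp <| eq_zero_of_forall_apply_smul_eq_zero he hess hσe fun r => ?_
  rw [smul_sub, ← map_smul, ← map_smul, map_sub, h, sub_self]

end EssentialExtension

section Duality

variable {R E : Type u} [CommRing R] [IsLocalRing R] [AddCommGroup E] [Module R E] {e : E}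

theorem exists_smul_eq_and_forall_mem_smul_eq_zero (hE : Module.Injective R E)
    (he : ∀ r : R, r • e = 0 ↔ r ∈ maximalIdeal R) {J : Ideal R} {a : R} (haJ : a ∉ J) :
    ∃ w : E, a • w = e ∧ ∀ s ∈ J, s • w = 0 := by
  have hann : ∀ r : R, r • Ideal.Quotient.mk J a = 0 → r • e = 0 := by
    intro r hr
    refine (he r).mpr (by_contra fun hr' => haJ ?_)
    rw [Algebra.smul_def, Ideal.Quotient.algebraMap_eq, ← map_mul,
      Ideal.Quotient.eq_zero_iff_mem] at hr
    exact (Ideal.unit_mul_mem_iff_mem J (notMem_maximalIdeal.mp hr')).mp hr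
  obtain ⟨ψ, hψ⟩ := hE.exists_apply_eq hann
  have hψ_smul (r : R) : r • ψ 1 = ψ (Ideal.Quotient.mk J r) := by
    rw [← map_smul, Algebra.smul_def, mul_one, Ideal.Quotient.algebraMap_eq]
  refine ⟨ψ 1, by rw [hψ_smul, hψ], fun s hs => ?_⟩
  rw [hψ_smul, Ideal.Quotient.eq_zero_iff_mem.mpr hs, map_zero]

variable {k : Type*} [Field k] [Algebra k R] [Module k E] [IsScalarTower k R E]
  {σ : E →ₗ[k] k}

theorem exists_apply_smul_eq_of_pow_le [IsNoetherianRing R]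
    (hk : Function.Surjective ((residue R).comp (algebraMap k R))) (hE : Module.Injective R E)
    (he : ∀ r : R, r • e = 0 ↔ r ∈ maximalIdeal R) (hσe : σ e = 1) {u : ℕ} (J : Ideal R)
    (hu : maximalIdeal R ^ u ≤ J) (δ : R →ₗ[k] k) (hδ : ∀ r ∈ J, δ r = 0) :
    ∃ w : E, ∀ r : R, σ (r • w) = δ r := by
  induction J using WellFoundedGT.induction generalizing δ with
  | ind J ih =>
  by_cases hJ : J = ⊤
  · exact ⟨0, fun r => by rw [smul_zero, map_zero, hδ r (hJ ▸ Submodule.mem_top)]⟩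
  obtain ⟨a, haJ, ha⟩ := Ideal.exists_notMem_forall_mul_mem hJ hu
  obtain ⟨w₁, hw₁a, hw₁J⟩ := exists_smul_eq_and_forall_mem_smul_eq_zero hE he haJ
  let τ : R →ₗ[k] k := σ ∘ₗ (LinearMap.toSpanSingleton R E w₁).restrictScalars k
  have hJa : J < J ⊔ Ideal.span {a} := lt_of_le_of_ne le_sup_left fun h =>
    haJ (h ▸ Ideal.mem_sup_right (Ideal.mem_span_singleton_self a))
  have hvanish : ∀ r ∈ J ⊔ Ideal.span {a}, (δ - δ a • τ) r = 0 := by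
    intro r hr
    obtain ⟨j, hj, _, hra, rfl⟩ := Submodule.mem_sup.mp hr
    obtain ⟨s, rfl⟩ := Ideal.mem_span_singleton'.mp hra
    obtain ⟨c, hc⟩ := exists_sub_algebraMap_mem_maximalIdeal hk s
    have hδsa : δ (s * a) = c * δ a := by
      have hsa : s * a - c • a ∈ J := by rw [Algebra.smul_def, ← sub_mul]; exact ha _ hc
      have := hδ _ hsa
      rwa [map_sub, map_smul, sub_eq_zero] at this
    have hτsa : τ (s * a) = c := by
      have hse : s • e = c • e := by
        rw [← algebraMap_smul R c e, ← sub_eq_zero, ← sub_smul]; exact (he _).mpr hc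
      simp [τ, mul_smul, hw₁a, hse, hσe]
    have hτj : τ j = 0 := by simp [τ, hw₁J j hj]
    rw [LinearMap.sub_apply, LinearMap.smul_apply, map_add, map_add, hδ j hj, hτj, hδsa, hτsa,
      smul_eq_mul]
    ring
  obtain ⟨w', hw'⟩ := ih _ hJa (hu.trans le_sup_left) (δ - δ a • τ) hvanish
  refine ⟨w' + δ a • w₁, fun r => ?_⟩
  simp [hw', smul_comm r (δ a) w₁, τ]

theorem exists_linearMap_forall_apply_eq [IsNoetherianRing R]
    (hk : Function.Surjective ((residue R).comp (algebraMap k R))) (hE : Module.Injective R E)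
    (he : ∀ r : R, r • e = 0 ↔ r ∈ maximalIdeal R)
    (hess : ∀ N : Submodule R E, N ≠ ⊥ → N ⊓ Submodule.span R {e} ≠ ⊥) (hσe : σ e = 1)
    {M : Type*} [AddCommGroup M] [Module R M] [Module k M] [IsScalarTower k R M]
    (g : M →ₗ[k] k) (hg : ∀ x : M, ∃ t : ℕ, ∀ r ∈ maximalIdeal R ^ t, g (r • x) = 0) :
    ∃ φ : M →ₗ[R] E, ∀ x : M, σ (φ x) = g x := by
  have hw (x : M) : ∃ w : E, ∀ r : R, σ (r • w) = g (r • x) := by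
    obtain ⟨t, ht⟩ := hg x
    exact exists_apply_smul_eq_of_pow_le hk hE he hσe _ le_rfl
      (g ∘ₗ (LinearMap.toSpanSingleton R M x).restrictScalars k) ht
  choose w hw using hw
  have hw_unique {x : M} {y : E} (h : ∀ r : R, σ (r • y) = g (r • x)) : w x = y :=
    sub_eq_zero.mp <| eq_zero_of_forall_apply_smul_eq_zero he hess hσe fun r => by
      rw [smul_sub, map_sub, hw, h, sub_self]
  refine ⟨{ toFun := w
            map_add' := fun x y => hw_unique fun r => ?_
            map_smul' := fun s x => hw_unique fun r => ?_ }, fun x => by simpa using hw x 1⟩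
  · simp [smul_add, hw]
  · simp [smul_smul, hw]

end Duality

theorem stmt9_general {R : Type} [CommRing R] [IsNoetherianRing R] [IsLocalRing R]
    (k : Type) [Field k] [Algebra k R]
    (hcoef : Function.Bijective ((IsLocalRing.residue R).comp (algebraMap k R)))
    (E : Type) [AddCommGroup E] [Module R E] [Module k E] [IsScalarTower k R E]
    (hEinj : Module.Injective R E) (e : E)
    (he : ∀ r : R, r • e = 0 ↔ r ∈ IsLocalRing.maximalIdeal R)
    (hess : ∀ N : Submodule R E, N ≠ ⊥ → N ⊓ Submodule.span R {e} ≠ ⊥)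
    (σ : E →ₗ[k] k) (hσe : σ e = 1)
    (M : Type) [AddCommGroup M] [Module R M] [Module k M] [IsScalarTower k R M] :
    -- (1) Φ_M(φ) = σ ∘ φ is Σ-continuous
    (∀ φ : M →ₗ[R] E,
        SigmaContToK k (IsLocalRing.maximalIdeal R) (σ ∘ₗ (φ.restrictScalars k))) ∧
    -- (2) Φ_M is injective
    (∀ φ ψ : M →ₗ[R] E, (∀ x : M, σ (φ x) = σ (ψ x)) → φ = ψ) ∧
    -- (3) Φ_M is surjective onto the Σ-continuous k-linear functionals
    (∀ g : M →ₗ[k] k, SigmaContToK k (IsLocalRing.maximalIdeal R) g →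
        ∃ φ : M →ₗ[R] E, ∀ x : M, σ (φ x) = g x) ∧
    -- (4) Φ_M is R-linear for the action (r·λ)(x) = λ(r·x) on functionals
    (∀ (r : R) (φ : M →ₗ[R] E) (x : M), σ ((r • φ) x) = σ (φ (r • x))) ∧
    -- (5) Φ is functorial in M
    (∀ (M' : Type) [AddCommGroup M'] [Module R M'],
        ∀ (f : M' →ₗ[R] M) (φ : M →ₗ[R] E) (x : M'), σ ((φ ∘ₗ f) x) = σ (φ (f x))) := by
  refine ⟨fun φ => sigmaContToK_comp (fun N hN => exists_pow_smul_eq_bot_of_fg he hess hN) σ φ,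
    fun φ ψ h => linearMap_ext_of_forall_apply_eq he hess hσe h,
    fun g hg => exists_linearMap_forall_apply_eq hcoef.2 hEinj he hess hσe g fun x => ?_,
    fun r φ x => by rw [LinearMap.smul_apply, φ.map_smul], fun M' _ _ f φ x => rfl⟩
  obtain ⟨t, ht⟩ := hg _ (Submodule.fg_span_singleton x)
  exact ⟨t, fun r hr => ht _ (Submodule.smul_mem_smul hr (Submodule.mem_span_singleton_self x))⟩

theorem stmt9 {R : Type} [CommRing R] [IsNoetherianRing R] [IsLocalRing R]
    (k : Type) [Field k] [Algebra k R]
    (hcoef : Function.Bijective ((IsLocalRing.residue R).comp (algebraMap k R)))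
    (E : Type) [AddCommGroup E] [Module R E] [Module k E] [IsScalarTower k R E]
    (hEinj : Module.Injective R E) (e : E)
    (he : ∀ r : R, r • e = 0 ↔ r ∈ IsLocalRing.maximalIdeal R)
    (hess : ∀ N : Submodule R E, N ≠ ⊥ → N ⊓ Submodule.span R {e} ≠ ⊥)
    (σ : E →ₗ[k] k) (hσe : σ e = 1)
    (hσsoc : ∀ x : E, (∀ r ∈ IsLocalRing.maximalIdeal R, r • x = 0) → σ x = 0 → x = 0)
    (M : Type) [AddCommGroup M] [Module R M] [Module k M] [IsScalarTower k R M] :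
    -- (1) Φ_M(φ) = σ ∘ φ is Σ-continuous
    (∀ φ : M →ₗ[R] E,
        SigmaContToK k (IsLocalRing.maximalIdeal R) (σ ∘ₗ (φ.restrictScalars k))) ∧
    -- (2) Φ_M is injective
    (∀ φ ψ : M →ₗ[R] E, (∀ x : M, σ (φ x) = σ (ψ x)) → φ = ψ) ∧
    -- (3) Φ_M is surjective onto the Σ-continuous k-linear functionals
    (∀ g : M →ₗ[k] k, SigmaContToK k (IsLocalRing.maximalIdeal R) g →
        ∃ φ : M →ₗ[R] E, ∀ x : M, σ (φ x) = g x) ∧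
    -- (4) Φ_M is R-linear for the action (r·λ)(x) = λ(r·x) on functionals
    (∀ (r : R) (φ : M →ₗ[R] E) (x : M), σ ((r • φ) x) = σ (φ (r • x))) ∧
    -- (5) Φ is functorial in M
    (∀ (M' : Type) [AddCommGroup M'] [Module R M'],
        ∀ (f : M' →ₗ[R] M) (φ : M →ₗ[R] E) (x : M'), σ ((φ ∘ₗ f) x) = σ (φ (f x))) :=
  stmt9_general k hcoef E hEinj e he hess σ hσe M
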